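/- Let (C, J) be a small site and X an object of C, and endow the over category C/X with the induced (over) topology J/X. Then the restriction functor j* from abelian sheaves on (C, J) to abelian sheaves on (C/X, J/X), given by precomposition with the (opposite of the) forgetful functor, sends injective objects to injective objects: if E is an injective abelian sheaf on (C, J), then j*E is an injective abelian sheaf on (C/X, J/X). -/

import Mathlib

/-!
The restriction `j^*` along `Over.forget X` has the left adjoint `j_! = a ∘ Lan`, where `Lan` is
the left Kan extension along `(Over.forget X).op` and `a` is sheafification. Pointwise,
`(Lan F)(Y) = ⨁_{g : Y ⟶ X} F(Y, g)`: every connected component of the indexing category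
`CostructuredArrow (Over.forget X).op Y` has a terminal object `(Over.mk g, 𝟙)`, so the discrete
family of these objects is final. Coproducts of abelian groups are exact (AB4)
and sheafification is left exact, so `j_!` preserves monomorphisms; hence its right adjoint `j^*`
preserves injective objects.
-/

open CategoryTheory CategoryTheory.Limits

universe u

namespace CategoryTheory

open Opposite

lemma Functor.lan_preservesMonomorphisms {C D A : Type*} [Category C] [Category D] [Category A]
    [HasPullbacks A] (L : C ⥤ D) [∀ F : C ⥤ A, L.HasPointwiseLeftKanExtension F]
    [∀ Y, HasColimitsOfShape (CostructuredArrow L Y) A]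
    [∀ Y, (colim : (CostructuredArrow L Y ⥤ A) ⥤ A).PreservesMonomorphisms] :
    (L.lan : (C ⥤ A) ⥤ (D ⥤ A)).PreservesMonomorphisms where
  preserves {F F'} η _ := by
    refine (NatTrans.mono_iff_mono_app _).2 fun Y => ?_
    have : Mono (Functor.whiskerLeft (CostructuredArrow.proj L Y) η) :=
      (NatTrans.mono_iff_mono_app _).2 fun f => inferInstanceAs (Mono (η.app f.left))
    refine colim.map_mono' (Functor.whiskerLeft (CostructuredArrow.proj L Y) η)
      (L.isPointwiseLeftKanExtensionLeftKanExtensionUnit F Y)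
      (L.isPointwiseLeftKanExtensionLeftKanExtensionUnit F' Y) ((L.lan.map η).app Y) fun f => ?_
    have unit_naturality := congr_app (L.lanUnit.naturality η) f.left
    dsimp at unit_naturality
    change ((L.lanUnit.app F).app f.left ≫ (L.lan.obj F).map f.hom) ≫ (L.lan.map η).app Y =
      η.app f.left ≫ (L.lanUnit.app F').app f.left ≫ (L.lan.obj F').map f.hom
    rw [Category.assoc, (L.lan.map η).naturality, reassoc_of% unit_naturality]

lemma Functor.sheafPullback_preservesMonomorphisms {C D : Type*} [Category C] [Category D]
    (G : C ⥤ D) (A : Type*) [Category A] [HasPullbacks A] (J : GrothendieckTopology C)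
    (K : GrothendieckTopology D) [G.IsContinuous J K]
    [∀ F : Cᵒᵖ ⥤ A, G.op.HasLeftKanExtension F] [HasSheafify K A]
    [(G.op.lan : (Cᵒᵖ ⥤ A) ⥤ (Dᵒᵖ ⥤ A)).PreservesMonomorphisms] :
    (G.sheafPullback A J K).PreservesMonomorphisms := by
  have : (sheafToPresheaf J A).PreservesMonomorphisms :=
    preservesMonomorphisms_of_preservesLimitsOfShape _
  have : (presheafToSheaf K A).PreservesMonomorphisms :=
    preservesMonomorphisms_of_preservesLimitsOfShape _
  have : (sheafPullbackConstruction.sheafPullback G A J K).PreservesMonomorphisms := by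
    unfold sheafPullbackConstruction.sheafPullback
    infer_instance
  exact Functor.PreservesMonomorphisms.of_iso
    (sheafPullbackConstruction.sheafPullbackIso G A J K).symm

namespace Over

variable {C : Type*} [Category C] (X : C) (Y : Cᵒᵖ)

noncomputable def discreteToCostructuredArrowForgetOp :
    Discrete (Y.unop ⟶ X) ⥤ CostructuredArrow (Over.forget X).op Y :=
  Discrete.functor fun g => CostructuredArrow.mk (Y := op (Over.mk g)) (𝟙 _)

variable {X Y}

lemma discreteToCostructuredArrowForgetOp_hom_left
    {d : CostructuredArrow (Over.forget X).op Y} {j : Discrete (Y.unop ⟶ X)}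
    (φ : d ⟶ (discreteToCostructuredArrowForgetOp X Y).obj j) :
    φ.left.unop.left = d.hom.unop :=
  congrArg Quiver.Hom.unop ((Category.comp_id _).symm.trans (CostructuredArrow.w φ))

lemma discreteToCostructuredArrowForgetOp_as_eq
    {d : CostructuredArrow (Over.forget X).op Y} {j : Discrete (Y.unop ⟶ X)}
    (φ : d ⟶ (discreteToCostructuredArrowForgetOp X Y).obj j) :
    j.as = d.hom.unop ≫ d.left.unop.hom :=
  discreteToCostructuredArrowForgetOp_hom_left φ ▸ (Over.w φ.left.unop).symm

instance (d : CostructuredArrow (Over.forget X).op Y) (j : Discrete (Y.unop ⟶ X)) :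
    Subsingleton (d ⟶ (discreteToCostructuredArrowForgetOp X Y).obj j) where
  allEq φ ψ := CostructuredArrow.hom_ext _ _ <| Quiver.Hom.unop_inj <| Over.OverMorphism.ext <|
    (discreteToCostructuredArrowForgetOp_hom_left φ).trans
      (discreteToCostructuredArrowForgetOp_hom_left ψ).symm

noncomputable def toDiscreteToCostructuredArrowForgetOp
    (d : CostructuredArrow (Over.forget X).op Y) :
    d ⟶ (discreteToCostructuredArrowForgetOp X Y).obj ⟨d.hom.unop ≫ d.left.unop.hom⟩ :=
  CostructuredArrow.homMk (Over.homMk d.hom.unop rfl).op (Category.comp_id _)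

instance (d : CostructuredArrow (Over.forget X).op Y) :
    HasInitial (StructuredArrow d (discreteToCostructuredArrowForgetOp X Y)) :=
  IsInitial.hasInitial (X := StructuredArrow.mk (toDiscreteToCostructuredArrowForgetOp d)) <|
    IsInitial.ofUniqueHom
      (fun o => StructuredArrow.homMk
        (Discrete.eqToHom (discreteToCostructuredArrowForgetOp_as_eq o.hom).symm)
        (Subsingleton.elim _ _))
      (fun _ _ => StructuredArrow.hom_ext _ _ (Subsingleton.elim _ _))

instance : (discreteToCostructuredArrowForgetOp X Y).Final :=
  have := isRightAdjointOfStructuredArrowInitials (discreteToCostructuredArrowForgetOp X Y)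
  inferInstance

end Over

section

variable {C : Type*} [Category.{u} C] (X : C) (A : Type*) [Category A] [HasCoproducts.{u} A]

instance (Y : Cᵒᵖ) : HasColimitsOfShape (CostructuredArrow (Over.forget X).op Y) A :=
  Functor.Final.hasColimitsOfShape_of_final (Over.discreteToCostructuredArrowForgetOp X Y)

variable [HasFiniteLimits A] [AB4OfSize.{u} A]

instance (Y : Cᵒᵖ) :
    (colim : (CostructuredArrow (Over.forget X).op Y ⥤ A) ⥤ A).PreservesMonomorphisms :=
  have := hasExactColimitsOfShape_of_final A (Over.discreteToCostructuredArrowForgetOp X Y)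
  inferInstance

instance : ((Over.forget X).op.lan : ((Over X)ᵒᵖ ⥤ A) ⥤ (Cᵒᵖ ⥤ A)).PreservesMonomorphisms :=
  (Over.forget X).op.lan_preservesMonomorphisms

end

end CategoryTheory

/-- Let `(C, J)` be a small site and `X : C`, and endow `C/X` with the induced (over)
topology `J.over X`.  The restriction functor `j*` on abelian sheaves, given by
precomposition with the (opposite of the) forgetful functor `C/X ⥤ C`, sends injective
abelian sheaves to injective abelian sheaves. -/
theorem over_restriction_preserves_injective_abelian_sheaves {C : Type u}
    [SmallCategory C] (J : GrothendieckTopology C) (X : C)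
    (E : Sheaf J AddCommGrpCat.{u}) (hE : Injective E) :
    Injective (((Over.forget X).sheafPushforwardContinuous AddCommGrpCat.{u}
      (J.over X) J).obj E) :=
  have := (Over.forget X).sheafPullback_preservesMonomorphisms AddCommGrpCat.{u} (J.over X) J
  Injective.injective_of_adjoint
    ((Over.forget X).sheafAdjunctionContinuous AddCommGrpCat.{u} (J.over X) J) E
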